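/- Let n ≥ 1, K ≥ 2 be natural numbers, x₁, …, xₙ real numbers, and define the hat functions T_k : ℝ → ℝ by T_k(x) = max(0, 1 − |K·x − k|) for k = 0, 1, …, K. Let Z be the n × (K+1) real matrix with Z_{i,k} = T_k(x_i), let D₂ be the (K−1) × (K+1) matrix with entries (D₂)_{i,j} = 1 if j = i, −2 if j = i+1, 1 if j = i+2, and 0 otherwise, set Q₂ := D₂ᵀ D₂, let λ ≥ 0, and assume M := Zᵀ Z + λ Q₂ is invertible. Fix β₀, β₁ ∈ ℝ and define c ∈ ℝ^{K+1} by c_k = β₀ + β₁·(k/K). Then for every y ∈ ℝⁿ and every x ∈ [0,1]: (β₀ + β₁ x) + Σ_{k=0}^{K} T_k(x) · (M⁻¹ Zᵀ (y − Z c))_k = Σ_{k=0}^{K} T_k(x) · (M⁻¹ Zᵀ y)_k. -/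
import Mathlib


open Matrix

/-- The hat-function sum over all knots reduces to two consecutive terms. -/
lemma hat_two_terms (K : ℕ) (hK : 1 ≤ K) (t : ℝ) (ht0 : 0 ≤ t) (ht1 : t ≤ K) :
    ∃ m : ℕ, ∃ h1 : m + 1 ≤ K, (m : ℝ) ≤ t ∧ t ≤ (m : ℝ) + 1 ∧
      ∀ v : Fin (K + 1) → ℝ,
        ∑ k : Fin (K + 1), max 0 (1 - |t - ((k : ℕ) : ℝ)|) * v k
          = ((m : ℝ) + 1 - t) * v ⟨m, by omega⟩ + (t - (m : ℝ)) * v ⟨m + 1, by omega⟩ := by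
  set m : ℕ := min (Nat.floor t) (K - 1) with hm
  have hm1 : m + 1 ≤ K := by omega
  have hmt : (m : ℝ) ≤ t := by
    calc (m : ℝ) ≤ (Nat.floor t : ℝ) := by exact_mod_cast Nat.cast_le.mpr (min_le_left _ _)
    _ ≤ t := Nat.floor_le ht0
  have htm : t ≤ (m : ℝ) + 1 := by
    by_cases h : Nat.floor t ≤ K - 1
    · have : m = Nat.floor t := min_eq_left h
      rw [this]
      exact le_of_lt (Nat.lt_floor_add_one t)
    · have : m = K - 1 := min_eq_right (by omega)
      have hcast : (m : ℝ) + 1 = (K : ℝ) := by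
        rw [this]
        have : ((K - 1 : ℕ) : ℝ) = (K : ℝ) - 1 := by
          rw [Nat.cast_sub hK]; simp
        rw [this]; ring
      rw [hcast]; exact ht1
  refine ⟨m, hm1, hmt, htm, ?_⟩
  intro v
  set a : Fin (K + 1) := ⟨m, by omega⟩
  set b : Fin (K + 1) := ⟨m + 1, by omega⟩
  have hab : a ≠ b := by
    intro h; apply_fun Fin.val at h; simp [a, b] at h
  have hsub : ({a, b} : Finset (Fin (K + 1))) ⊆ Finset.univ := Finset.subset_univ _
  rw [← Finset.sum_subset hsub]
  · rw [Finset.sum_pair hab]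
    have hta : |t - ((a : ℕ) : ℝ)| = t - (m : ℝ) := by
      simp only [a]
      exact abs_of_nonneg (by simpa using sub_nonneg.mpr hmt)
    have htb : |t - ((b : ℕ) : ℝ)| = (m : ℝ) + 1 - t := by
      have : t - (((b : ℕ) : ℝ)) = -((m : ℝ) + 1 - t) := by
        simp only [b]; push_cast; ring
      rw [this, abs_neg]
      exact abs_of_nonneg (by linarith)
    rw [hta, htb]
    have h1 : max 0 (1 - (t - (m : ℝ))) = (m : ℝ) + 1 - t := by
      rw [max_eq_right (by linarith)]; ring
    have h2 : max 0 (1 - ((m : ℝ) + 1 - t)) = t - (m : ℝ) := by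
      rw [max_eq_right (by linarith)]; ring
    rw [h1, h2]
  · intro k _ hk
    simp only [Finset.mem_insert, Finset.mem_singleton] at hk
    push_neg at hk
    obtain ⟨hka, hkb⟩ := hk
    have hka' : (k : ℕ) ≠ m := fun h => hka (Fin.ext h)
    have hkb' : (k : ℕ) ≠ m + 1 := fun h => hkb (Fin.ext h)
    have habs : 1 ≤ |t - ((k : ℕ) : ℝ)| := by
      rcases lt_or_gt_of_ne hka' with h | h
      · -- k < m, so t - k ≥ m - k ≥ 1
        have : ((k : ℕ) : ℝ) + 1 ≤ (m : ℝ) := by exact_mod_cast h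
        have h2 : 1 ≤ t - ((k : ℕ) : ℝ) := by linarith
        calc (1 : ℝ) ≤ t - ((k : ℕ) : ℝ) := h2
        _ ≤ |t - ((k : ℕ) : ℝ)| := le_abs_self _
      · -- k > m, k ≠ m+1 so k ≥ m+2
        have hk2 : m + 2 ≤ (k : ℕ) := by omega
        have : (m : ℝ) + 2 ≤ ((k : ℕ) : ℝ) := by exact_mod_cast hk2
        have h2 : 1 ≤ ((k : ℕ) : ℝ) - t := by linarith
        calc (1 : ℝ) ≤ ((k : ℕ) : ℝ) - t := h2
        _ ≤ |t - ((k : ℕ) : ℝ)| := by rw [abs_sub_comm]; exact le_abs_self _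
    have : max 0 (1 - |t - ((k : ℕ) : ℝ)|) = 0 := max_eq_left (by linarith)
    rw [this, zero_mul]

/-- Corollary 1 in concrete form for linear splines: with hat-function basis
`T_k(x) = max(0, 1 − |Kx − k|)` at equidistant knots `k/K`, design matrix
`Z_{i,k} = T_k(x_i)`, second-order difference penalty `Q₂ = D₂ᵀD₂` and
smoothing parameter `λ ≥ 0` with `M = ZᵀZ + λQ₂` invertible, the
semiparametric penalized spline estimator built on the linear parametric
start `β₀ + β₁ x` coincides with the fully nonparametric one. -/
theorem stmt12 (n K : ℕ) (hn : 1 ≤ n) (hK : 2 ≤ K) (xd : Fin n → ℝ)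
    (T : ℕ → ℝ → ℝ)
    (hT : ∀ (k : ℕ) (x : ℝ), T k x = max 0 (1 - |(K : ℝ) * x - (k : ℝ)|))
    (Z : Matrix (Fin n) (Fin (K + 1)) ℝ)
    (hZ : ∀ (i : Fin n) (k : Fin (K + 1)), Z i k = T (k : ℕ) (xd i))
    (D₂ : Matrix (Fin (K - 1)) (Fin (K + 1)) ℝ)
    (hD : ∀ (i : Fin (K - 1)) (j : Fin (K + 1)),
      D₂ i j =
        if (j : ℕ) = (i : ℕ) then 1
        else if (j : ℕ) = (i : ℕ) + 1 then -2
        else if (j : ℕ) = (i : ℕ) + 2 then 1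
        else 0)
    (lam : ℝ) (hlam : 0 ≤ lam)
    (hM : IsUnit (Zᵀ * Z + lam • (D₂ᵀ * D₂)).det)
    (β₀ β₁ : ℝ) (c : Fin (K + 1) → ℝ)
    (hc : ∀ k : Fin (K + 1), c k = β₀ + β₁ * ((k : ℝ) / (K : ℝ))) :
    ∀ (y : Fin n → ℝ), ∀ x ∈ Set.Icc (0 : ℝ) 1,
      (β₀ + β₁ * x) +
        ∑ k : Fin (K + 1),
          T (k : ℕ) x *
            ((Zᵀ * Z + lam • (D₂ᵀ * D₂))⁻¹.mulVec (Zᵀ.mulVec (y - Z.mulVec c))) k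
      = ∑ k : Fin (K + 1),
          T (k : ℕ) x * ((Zᵀ * Z + lam • (D₂ᵀ * D₂))⁻¹.mulVec (Zᵀ.mulVec y)) k := by
  intro y x hx
  obtain ⟨hx0, hx1⟩ := hx
  have hK0 : (K : ℝ) ≠ 0 := by positivity
  set M : Matrix (Fin (K + 1)) (Fin (K + 1)) ℝ := Zᵀ * Z + lam • (D₂ᵀ * D₂) with hMdef
  -- Step 1 : D₂ annihilates the linear coefficient vector c
  have hDc : D₂.mulVec c = 0 := by
    funext i
    have hi : (i : ℕ) + 2 ≤ K := by
      have := i.isLt; omega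
    set a : Fin (K + 1) := ⟨(i : ℕ), by omega⟩ with ha
    set b : Fin (K + 1) := ⟨(i : ℕ) + 1, by omega⟩ with hb
    set d : Fin (K + 1) := ⟨(i : ℕ) + 2, by omega⟩ with hd
    have key : ∀ j : Fin (K + 1), D₂ i j * c j =
        (if a = j then c a else 0) + (if b = j then (-2 : ℝ) * c b else 0)
          + (if d = j then c d else 0) := by
      intro j
      rw [hD i j]
      rcases eq_or_ne ((j : ℕ)) ((i : ℕ)) with h1 | h1
      · have e1 : a = j := Fin.ext h1.symm
        have e2 : b ≠ j := fun h => by apply_fun Fin.val at h; simp [hb] at h; omega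
        have e3 : d ≠ j := fun h => by apply_fun Fin.val at h; simp [hd] at h; omega
        rw [if_pos h1, if_pos e1, if_neg e2, if_neg e3, ← e1]
        ring
      rcases eq_or_ne ((j : ℕ)) ((i : ℕ) + 1) with h2 | h2
      · have e1 : a ≠ j := fun h => by apply_fun Fin.val at h; simp [ha] at h; omega
        have e2 : b = j := Fin.ext h2.symm
        have e3 : d ≠ j := fun h => by apply_fun Fin.val at h; simp [hd] at h; omega
        rw [if_neg h1, if_pos h2, if_neg e1, if_pos e2, if_neg e3, ← e2]
        ring
      rcases eq_or_ne ((j : ℕ)) ((i : ℕ) + 2) with h3 | h3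
      · have e1 : a ≠ j := fun h => by apply_fun Fin.val at h; simp [ha] at h; omega
        have e2 : b ≠ j := fun h => by apply_fun Fin.val at h; simp [hb] at h; omega
        have e3 : d = j := Fin.ext h3.symm
        rw [if_neg h1, if_neg h2, if_pos h3, if_neg e1, if_neg e2, if_pos e3, ← e3]
        ring
      · have e1 : a ≠ j := fun h => by apply_fun Fin.val at h; simp [ha] at h; omega
        have e2 : b ≠ j := fun h => by apply_fun Fin.val at h; simp [hb] at h; omega
        have e3 : d ≠ j := fun h => by apply_fun Fin.val at h; simp [hd] at h; omega
        rw [if_neg h1, if_neg h2, if_neg h3, if_neg e1, if_neg e2, if_neg e3]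
        ring
    have : D₂.mulVec c i = ∑ j : Fin (K + 1), D₂ i j * c j := rfl
    rw [Pi.zero_apply, this]
    simp only [key]
    rw [Finset.sum_add_distrib, Finset.sum_add_distrib]
    simp only [Finset.sum_ite_eq, Finset.mem_univ, if_true]
    rw [hc a, hc b, hc d]
    simp only [ha, hb, hd]
    push_cast
    field_simp
    ring
  -- Step 2 : M c = Zᵀ Z c
  have hQc : (D₂ᵀ * D₂).mulVec c = 0 := by
    rw [← Matrix.mulVec_mulVec, hDc, Matrix.mulVec_zero]
  have hMc : M.mulVec c = Zᵀ.mulVec (Z.mulVec c) := by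
    rw [hMdef, Matrix.add_mulVec, Matrix.smul_mulVec, hQc, smul_zero, add_zero,
      ← Matrix.mulVec_mulVec]
  -- Step 3 : M⁻¹ Zᵀ (y - Z c) = M⁻¹ Zᵀ y - c
  have hMinvM : M⁻¹.mulVec (M.mulVec c) = c := by
    rw [Matrix.mulVec_mulVec, Matrix.nonsing_inv_mul M hM, Matrix.one_mulVec]
  have hinv : M⁻¹.mulVec (Zᵀ.mulVec (y - Z.mulVec c))
      = M⁻¹.mulVec (Zᵀ.mulVec y) - c := by
    rw [Matrix.mulVec_sub, Matrix.mulVec_sub, ← hMc, hMinvM]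
  -- Step 4 : linear precision of hat functions
  have hlin : ∑ k : Fin (K + 1), T (k : ℕ) x * c k = β₀ + β₁ * x := by
    have ht0 : 0 ≤ (K : ℝ) * x := by positivity
    have ht1 : (K : ℝ) * x ≤ K := by nlinarith
    obtain ⟨m, hm1, hmt, htm, hsum⟩ :=
      hat_two_terms K (by omega) ((K : ℝ) * x) ht0 ht1
    have : ∑ k : Fin (K + 1), T (k : ℕ) x * c k
        = ∑ k : Fin (K + 1), max 0 (1 - |(K : ℝ) * x - ((k : ℕ) : ℝ)|) * c k := by
      apply Finset.sum_congr rfl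
      intro k _
      rw [hT]
    rw [this, hsum c, hc, hc]
    push_cast
    field_simp
    ring
  -- Conclusion
  rw [hinv]
  have hsplit : ∑ k : Fin (K + 1),
      T (k : ℕ) x * (M⁻¹.mulVec (Zᵀ.mulVec y) - c) k
      = (∑ k : Fin (K + 1), T (k : ℕ) x * (M⁻¹.mulVec (Zᵀ.mulVec y)) k)
        - ∑ k : Fin (K + 1), T (k : ℕ) x * c k := by
    rw [← Finset.sum_sub_distrib]
    apply Finset.sum_congr rfl
    intro k _
    simp [mul_sub]
  rw [hsplit, hlin]
  ring
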